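/- Let k be an algebraically closed field of characteristic p > 5 and let a ∈ k with a ∉ {0, 1, −1}. Let K be the field of fractions of the integral domain k[X,Y]/(Y² − X(X²−1)(X²−a²)), with x, y the images of X, Y. Then every k-algebra automorphism φ of K with φ(x) = −x satisfies φ²(x) = x and φ²(y) = −y; in particular φ² ≠ id and φ has order exactly 4. -/

import Mathlib

open MvPolynomial

set_option synthInstance.maxHeartbeats 1000000
set_option maxHeartbeats 1000000

/-! Since `φ` negates `x` and `x(x²−1)(x²−a²)` is odd in `x`, `φ(y)² = φ(y²) = −y²`, so
`φ(y) = ±iy` with `i² = −1` a constant, and then `φ²(y) = i²y = −y`. As `y ≠ 0` and `2 ≠ 0`, this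
gives `φ² ≠ id`, while `φ⁴` fixes the constants, `x` and `y`, which generate `K`, so `φ⁴ = id`. -/

/-- The ideal `(Y² − X(X²−1)(X²−a²))` in `k[X,Y]`, where `X = X 0`, `Y = X 1`. -/
noncomputable def curveIdeal2 (k : Type) [Field k] (a : k) :
    Ideal (MvPolynomial (Fin 2) k) :=
  Ideal.span {X 1 ^ 2 - X 0 * (X 0 ^ 2 - 1) * (X 0 ^ 2 - C a ^ 2)}

/-- The affine coordinate ring `R = k[X,Y]/(Y² − X(X²−1)(X²−a²))`. -/
abbrev CurveRing2 (k : Type) [Field k] (a : k) : Type :=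
  MvPolynomial (Fin 2) k ⧸ curveIdeal2 k a

/-- The image of a polynomial `f ∈ k[X,Y]` in the fraction field of the coordinate ring. -/
noncomputable def emb2 (k : Type) [Field k] (a : k) (f : MvPolynomial (Fin 2) k) :
    FractionRing (CurveRing2 k a) :=
  algebraMap (CurveRing2 k a) (FractionRing (CurveRing2 k a))
    (Ideal.Quotient.mk (curveIdeal2 k a) f)

theorem apply_apply_eq_neg_of_apply_sq_eq_neg_sq {R F : Type*} [CommRing R] [NoZeroDivisors R]
    [FunLike F R R] [RingHomClass F R R] (φ : F) {i y : R} (hi : i ^ 2 = -1) (hφi : φ i = i)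
    (hy : φ y ^ 2 = -y ^ 2) : φ (φ y) = -y := by
  obtain h | h := sq_eq_sq_iff_eq_or_eq_neg.mp (show φ y ^ 2 = (i * y) ^ 2 by
    rw [hy, mul_pow, hi, neg_one_mul])
  · rw [h, map_mul, hφi, h]
    linear_combination y * hi
  · rw [h, map_neg, map_mul, hφi, h]
    linear_combination y * hi

theorem FractionRing.ringHom_ext_mvPolynomial_quotient {σ R S : Type*} [CommRing R] [Semiring S]
    {I : Ideal (MvPolynomial σ R)} {f g : FractionRing (MvPolynomial σ R ⧸ I) →+* S}
    (hC : ∀ r, f (algebraMap _ _ (Ideal.Quotient.mk I (C r))) =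
      g (algebraMap _ _ (Ideal.Quotient.mk I (C r))))
    (hX : ∀ i, f (algebraMap _ _ (Ideal.Quotient.mk I (X i))) =
      g (algebraMap _ _ (Ideal.Quotient.mk I (X i)))) :
    f = g :=
  IsLocalization.ringHom_ext (nonZeroDivisors (MvPolynomial σ R ⧸ I)) <|
    Ideal.Quotient.ringHom_ext <| MvPolynomial.ringHom_ext hC hX

section Curve

variable (k : Type) [Field k] (a : k)

noncomputable def emb2Hom : MvPolynomial (Fin 2) k →+* FractionRing (CurveRing2 k a) :=
  (algebraMap (CurveRing2 k a) _).comp (Ideal.Quotient.mk (curveIdeal2 k a))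

theorem emb2Hom_apply (f : MvPolynomial (Fin 2) k) : emb2Hom k a f = emb2 k a f := rfl

theorem emb2_X_one_sq : emb2 k a (X 1) ^ 2 =
    emb2 k a (X 0) * (emb2 k a (X 0) ^ 2 - 1) * (emb2 k a (X 0) ^ 2 - emb2 k a (C a) ^ 2) := by
  have h : emb2Hom k a (X 1 ^ 2 - X 0 * (X 0 ^ 2 - 1) * (X 0 ^ 2 - C a ^ 2)) = 0 := by
    rw [emb2Hom, RingHom.comp_apply, (Ideal.Quotient.eq_zero_iff_mem
      (I := curveIdeal2 k a)).mpr (Ideal.mem_span_singleton_self _), map_zero]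
  simpa only [map_sub, map_mul, map_pow, map_one, emb2Hom_apply, sub_eq_zero] using h

theorem emb2_C (c : k) : emb2 k a (C c) = algebraMap k (FractionRing (CurveRing2 k a)) c := rfl

-- Setting `X = 0` sends the generator of the ideal to `Y²`, which does not divide `Y`.
theorem X_one_not_mem_curveIdeal2 : X 1 ∉ curveIdeal2 k a := by
  rw [curveIdeal2, Ideal.mem_span_singleton]
  intro h
  have h' : (Polynomial.X : Polynomial k) ^ 2 ∣ Polynomial.X := by
    simpa using map_dvd (aeval (R := k) ![0, (Polynomial.X : Polynomial k)]) h
  simpa using Polynomial.X_pow_dvd_iff.mp h' 1 one_lt_two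

theorem emb2_X_one_ne_zero : emb2 k a (X 1) ≠ 0 := by
  rw [emb2, map_ne_zero_iff _ (IsFractionRing.injective _ _), Ne, Ideal.Quotient.eq_zero_iff_mem]
  exact X_one_not_mem_curveIdeal2 k a

theorem ringEquiv_eq_refl_of_fix_emb2
    {ψ : FractionRing (CurveRing2 k a) ≃+* FractionRing (CurveRing2 k a)}
    (hC : ∀ c, ψ (emb2 k a (C c)) = emb2 k a (C c)) (hx : ψ (emb2 k a (X 0)) = emb2 k a (X 0))
    (hy : ψ (emb2 k a (X 1)) = emb2 k a (X 1)) : ψ = RingEquiv.refl _ :=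
  RingEquiv.toRingHom_injective <|
    FractionRing.ringHom_ext_mvPolynomial_quotient hC (Fin.forall_fin_two.mpr ⟨hx, hy⟩)

end Curve

theorem stmt2_general (k : Type) [Field k] [IsAlgClosed k] (p : ℕ) [CharP k p] (hp : 5 < p)
    (a : k)
    (hdom : IsDomain (CurveRing2 k a))
    (φ : FractionRing (CurveRing2 k a) ≃+* FractionRing (CurveRing2 k a))
    (hfix : ∀ c : k, φ (emb2 k a (C c)) = emb2 k a (C c))
    (hx : φ (emb2 k a (X 0)) = - emb2 k a (X 0)) :
    (φ.trans φ) (emb2 k a (X 0)) = emb2 k a (X 0) ∧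
    (φ.trans φ) (emb2 k a (X 1)) = - emb2 k a (X 1) ∧
    φ.trans φ ≠ RingEquiv.refl _ ∧
    ((φ.trans φ).trans φ).trans φ = RingEquiv.refl _ := by
  have := hdom
  have hcurve := emb2_X_one_sq k a
  simp only [emb2_C] at hfix hcurve
  set x := emb2 k a (X 0)
  set y := emb2 k a (X 1)
  obtain ⟨i, hi⟩ := IsAlgClosed.exists_pow_nat_eq (-1 : k) two_pos
  have hφy : φ y ^ 2 = -y ^ 2 := by
    rw [← map_pow, hcurve]
    simp only [map_mul, map_sub, map_pow, map_one, hx, hfix]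
    ring
  have h2x : φ (φ x) = x := by rw [hx, map_neg, hx, neg_neg]
  have h2y : φ (φ y) = -y := apply_apply_eq_neg_of_apply_sq_eq_neg_sq φ
    (by rw [← map_pow, hi, map_neg, map_one]) (hfix i) hφy
  refine ⟨h2x, h2y, fun h => ?_, ringEquiv_eq_refl_of_fix_emb2 k a
    (fun c => by simp only [RingEquiv.trans_apply, emb2_C, hfix])
    (show φ (φ (φ (φ x))) = x by rw [h2x, h2x])
    (show φ (φ (φ (φ y))) = y by rw [h2y, map_neg, map_neg, h2y, neg_neg])⟩
  have h2 : (2 : k) ≠ 0 := by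
    exact_mod_cast CharP.cast_ne_zero_of_ne_of_prime k Nat.prime_two (by omega : p ≠ 2)
  have h2K : (2 : FractionRing (CurveRing2 k a)) ≠ 0 := by
    rw [← map_ofNat (algebraMap k (FractionRing (CurveRing2 k a))) 2]
    exact (map_ne_zero _).mpr h2
  have h2y' : φ (φ y) = y := by simpa using congrArg (· y) h
  exact mul_ne_zero h2K (emb2_X_one_ne_zero k a) (by linear_combination h2y - h2y')

theorem stmt2 (k : Type) [Field k] [IsAlgClosed k] (p : ℕ) [CharP k p] (hp : 5 < p)
    (a : k) (ha0 : a ≠ 0) (ha1 : a ≠ 1) (han1 : a ≠ -1)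
    (hdom : IsDomain (CurveRing2 k a))
    (φ : FractionRing (CurveRing2 k a) ≃+* FractionRing (CurveRing2 k a))
    (hfix : ∀ c : k, φ (emb2 k a (C c)) = emb2 k a (C c))
    (hx : φ (emb2 k a (X 0)) = - emb2 k a (X 0)) :
    (φ.trans φ) (emb2 k a (X 0)) = emb2 k a (X 0) ∧
    (φ.trans φ) (emb2 k a (X 1)) = - emb2 k a (X 1) ∧
    φ.trans φ ≠ RingEquiv.refl _ ∧
    ((φ.trans φ).trans φ).trans φ = RingEquiv.refl _ :=
  stmt2_general k p hp a hdom φ hfix hx
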